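/- Let A and B be m×n complex matrices and E = B − A. Define γ′₁ := (‖A†E‖_F² − ‖B‖₂²‖A†EB†‖_F²)/‖A‖₂² + (‖EB†‖_F² − ‖A‖₂²‖A†EB†‖_F²)/‖B‖₂² and γ′₂ := (‖EA†‖_F² − ‖B‖₂²‖B†EA†‖_F²)/‖A‖₂² + (‖B†E‖_F² − ‖A‖₂²‖B†EA†‖_F²)/‖B‖₂². Then ‖B† − A†‖_F² ≥ max{γ′₁ + ‖B†EA†‖_F², γ′₂ + ‖A†EB†‖_F²}. -/

import Mathlib

/-!
With the orthogonal projections `Q = B†B` and `P = AA†`, the blocks `QFP`, `QF(1 - P)`,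
`(1 - Q)FP`, `(1 - Q)F(1 - P)` of `F = B† - A†` have Frobenius norms adding up to `‖F‖_F²`.
The Penrose equations give `QFP = -B†EA†`, `QF(1 - P) = B†(1 - P)` and `(1 - Q)FP = -(1 - Q)A†`.
Splitting `EB† = P EB† + (1 - P) EB†`, where `P EB† = A (A†EB†)` and `(1 - P) EB† = (B B†(1 - P))ᴴ`,
yields `‖EB†‖_F² ≤ ‖A‖₂² ‖A†EB†‖_F² + ‖B‖₂² ‖B†(1 - P)‖_F²`; the bound for `(1 - Q)A†` is the
same inequality for `Bᴴ, Aᴴ`. Exchanging `A` and `B` gives the second entry of the maximum.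
-/

open Matrix

/-- The square of the Frobenius norm of a complex matrix. -/
noncomputable def frobSq {α β : Type*} [Fintype α] [Fintype β] (M : Matrix α β ℂ) : ℝ :=
  ∑ i, ∑ j, ‖M i j‖ ^ 2

/-- The spectral norm (ℓ²-operator norm) of a complex matrix. -/
noncomputable def spec {α β : Type*} [Fintype α] [Fintype β] [DecidableEq β]
    (M : Matrix α β ℂ) : ℝ :=
  ‖LinearMap.toContinuousLinearMap (Matrix.toEuclideanLin M)‖

/-- `X` is the Moore–Penrose inverse of `M` (the four Penrose equations). -/
def IsMoorePenrose {α β : Type*} [Fintype α] [Fintype β]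
    (M : Matrix α β ℂ) (X : Matrix β α ℂ) : Prop :=
  M * X * M = M ∧ X * M * X = X ∧ (M * X)ᴴ = M * X ∧ (X * M)ᴴ = X * M

section Frobenius

variable {α β : Type*} [Fintype α] [Fintype β]

lemma frobSq_nonneg (M : Matrix α β ℂ) : 0 ≤ frobSq M := by
  unfold frobSq; positivity

@[simp]
lemma frobSq_neg (M : Matrix α β ℂ) : frobSq (-M) = frobSq M := by
  simp [frobSq]

@[simp]
lemma frobSq_conjTranspose (M : Matrix α β ℂ) : frobSq Mᴴ = frobSq M := by
  rw [frobSq, Finset.sum_comm]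
  simp [frobSq]

lemma frobSq_eq_re_trace (M : Matrix α β ℂ) : frobSq M = (Mᴴ * M).trace.re := by
  rw [frobSq, Finset.sum_comm]
  simp [trace, mul_apply, Complex.conj_mul', ← Complex.ofReal_pow]

lemma frobSq_eq_sum_norm_sq_col (M : Matrix α β ℂ) :
    frobSq M = ∑ j, ‖WithLp.toLp 2 fun i => M i j‖ ^ 2 := by
  rw [frobSq, Finset.sum_comm]
  simp [EuclideanSpace.norm_sq_eq]

lemma frobSq_mul_add_frobSq_one_sub_mul [DecidableEq α] {P : Matrix α α ℂ}
    (hP : IsStarProjection P) (X : Matrix α β ℂ) :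
    frobSq (P * X) + frobSq ((1 - P) * X) = frobSq X := by
  have hPH : Pᴴ = P := hP.isSelfAdjoint
  have hPP : P * (P * X) = P * X := by rw [← Matrix.mul_assoc, hP.isIdempotentElem.eq]
  have hcross : (P * X)ᴴ * (P * X) + ((1 - P) * X)ᴴ * ((1 - P) * X) = Xᴴ * X := by
    simp only [conjTranspose_mul, conjTranspose_sub, hPH, Matrix.sub_mul,
      Matrix.mul_sub, Matrix.one_mul, Matrix.mul_assoc, hPP]
    abel
  rw [frobSq_eq_re_trace, frobSq_eq_re_trace, frobSq_eq_re_trace, ← Complex.add_re,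
    ← trace_add, hcross]

lemma frobSq_mul_add_frobSq_mul_one_sub [DecidableEq β] {P : Matrix β β ℂ}
    (hP : IsStarProjection P) (X : Matrix α β ℂ) :
    frobSq (X * P) + frobSq (X * (1 - P)) = frobSq X := by
  have hPH : Pᴴ = P := hP.isSelfAdjoint
  have h1PH : (1 - P)ᴴ = 1 - P := hP.one_sub.isSelfAdjoint
  rw [← frobSq_conjTranspose (X * P), ← frobSq_conjTranspose (X * (1 - P)), conjTranspose_mul,
    conjTranspose_mul, hPH, h1PH, ← frobSq_conjTranspose X]
  exact frobSq_mul_add_frobSq_one_sub_mul hP Xᴴ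

end Frobenius

section Spectral

variable {α β γ : Type*} [Fintype α] [Fintype β] [Fintype γ] [DecidableEq β]

open scoped Matrix.Norms.L2Operator

lemma spec_eq_l2_opNorm (M : Matrix α β ℂ) : spec M = ‖M‖ := rfl

lemma spec_conjTranspose [DecidableEq α] (M : Matrix α β ℂ) : spec Mᴴ = spec M :=
  l2_opNorm_conjTranspose M

lemma frobSq_mul_le (M : Matrix α β ℂ) (X : Matrix β γ ℂ) :
    frobSq (M * X) ≤ spec M ^ 2 * frobSq X := by
  rw [frobSq_eq_sum_norm_sq_col (M * X), frobSq_eq_sum_norm_sq_col X, Finset.mul_sum]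
  refine Finset.sum_le_sum fun j _ => ?_
  have hcol : (WithLp.toLp 2 fun i => (M * X) i j) =
      (EuclideanSpace.equiv α ℂ).symm (M *ᵥ WithLp.toLp 2 fun k => X k j) := by
    ext i
    simp [mul_apply, mulVec, dotProduct]
  rw [hcol, ← mul_pow, spec_eq_l2_opNorm]
  exact pow_le_pow_left₀ (norm_nonneg _) (l2_opNorm_mulVec M _) 2

end Spectral

namespace IsMoorePenrose

variable {α β γ : Type*} [Fintype α] [Fintype β]
  {M : Matrix α β ℂ} {X : Matrix β α ℂ}

lemma conjTranspose (h : IsMoorePenrose M X) : IsMoorePenrose Mᴴ Xᴴ := by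
  obtain ⟨h₁, h₂, h₃, h₄⟩ := h
  refine ⟨?_, ?_, ?_, ?_⟩
  · rw [← conjTranspose_mul, ← conjTranspose_mul, ← Matrix.mul_assoc, h₁]
  · rw [← conjTranspose_mul, ← conjTranspose_mul, ← Matrix.mul_assoc, h₂]
  · rw [← conjTranspose_mul, conjTranspose_conjTranspose, h₄]
  · rw [← conjTranspose_mul, conjTranspose_conjTranspose, h₃]

lemma isStarProjection_mul_pinv [DecidableEq α] (h : IsMoorePenrose M X) :
    IsStarProjection (M * X) where
  isIdempotentElem := by
    rw [IsIdempotentElem, Matrix.mul_assoc, ← Matrix.mul_assoc X, h.2.1]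
  isSelfAdjoint := h.2.2.1

lemma isStarProjection_pinv_mul [DecidableEq β] (h : IsMoorePenrose M X) :
    IsStarProjection (X * M) where
  isIdempotentElem := by
    rw [IsIdempotentElem, Matrix.mul_assoc, ← Matrix.mul_assoc M, h.1]
  isSelfAdjoint := h.2.2.2

lemma mul_pinv_mul_assoc (h : IsMoorePenrose M X) (Y : Matrix β γ ℂ) :
    M * (X * (M * Y)) = M * Y := by
  rw [← Matrix.mul_assoc, ← Matrix.mul_assoc, h.1]

lemma pinv_mul_pinv_assoc (h : IsMoorePenrose M X) (Y : Matrix α γ ℂ) :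
    X * (M * (X * Y)) = X * Y := by
  rw [← Matrix.mul_assoc, ← Matrix.mul_assoc, h.2.1]

lemma pinv_mul_pinv_mul (h : IsMoorePenrose M X) : X * (M * X) = X := by
  rw [← Matrix.mul_assoc, h.2.1]

end IsMoorePenrose

section PseudoinversePerturbation

variable {α β : Type*} [Fintype α] [Fintype β] [DecidableEq α] [DecidableEq β]
  {A B : Matrix α β ℂ} {A' B' : Matrix β α ℂ}

lemma frobSq_add_frobSq_add_frobSq_le (hA : IsMoorePenrose A A') (hB : IsMoorePenrose B B') :
    frobSq (B' * (B - A) * A') + frobSq (B' * (1 - A * A')) + frobSq ((1 - B' * B) * A')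
      ≤ frobSq (B' - A') := by
  have hP := hA.isStarProjection_mul_pinv
  have hQ := hB.isStarProjection_pinv_mul
  have hQF := frobSq_mul_add_frobSq_one_sub_mul hQ (B' - A')
  have hQFP := frobSq_mul_add_frobSq_mul_one_sub hP (B' * B * (B' - A'))
  have hQFP' := frobSq_mul_add_frobSq_mul_one_sub hP ((1 - B' * B) * (B' - A'))
  have e₁ : B' * B * (B' - A') * (A * A') = -(B' * (B - A) * A') := by
    simp only [Matrix.mul_sub, Matrix.sub_mul, Matrix.mul_assoc, hA.pinv_mul_pinv_mul,
      hB.pinv_mul_pinv_assoc]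
    abel
  have e₂ : B' * B * (B' - A') * (1 - A * A') = B' * (1 - A * A') := by
    simp only [Matrix.mul_sub, Matrix.sub_mul, Matrix.mul_one, Matrix.mul_assoc,
      hA.pinv_mul_pinv_mul, hB.pinv_mul_pinv_mul]
    abel
  have e₃ : (1 - B' * B) * (B' - A') * (A * A') = -((1 - B' * B) * A') := by
    simp only [Matrix.mul_sub, Matrix.sub_mul, Matrix.one_mul, Matrix.mul_assoc,
      hA.pinv_mul_pinv_mul, hB.pinv_mul_pinv_mul]
    abel
  rw [e₁, e₂, frobSq_neg] at hQFP
  rw [e₃, frobSq_neg] at hQFP'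
  linarith [frobSq_nonneg ((1 - B' * B) * (B' - A') * (1 - A * A'))]

lemma frobSq_sub_mul_pinv_le (hA : IsMoorePenrose A A') (hB : IsMoorePenrose B B') :
    frobSq ((B - A) * B')
      ≤ spec A ^ 2 * frobSq (A' * (B - A) * B') + spec B ^ 2 * frobSq (B' * (1 - A * A')) := by
  rw [← frobSq_mul_add_frobSq_one_sub_mul hA.isStarProjection_mul_pinv ((B - A) * B')]
  have e₁ : A * A' * ((B - A) * B') = A * (A' * (B - A) * B') := by
    simp only [Matrix.mul_assoc]
  have e₂ : (1 - A * A') * ((B - A) * B') = (B * (B' * (1 - A * A')))ᴴ := by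
    have h1P : (1 - A * A')ᴴ = 1 - A * A' := hA.isStarProjection_mul_pinv.one_sub.isSelfAdjoint
    rw [← Matrix.mul_assoc B, conjTranspose_mul, h1P, hB.2.2.1]
    simp only [Matrix.sub_mul, Matrix.mul_sub, Matrix.one_mul, Matrix.mul_assoc,
      hA.mul_pinv_mul_assoc]
    abel
  rw [e₁, e₂, frobSq_conjTranspose]
  exact add_le_add (frobSq_mul_le _ _) (frobSq_mul_le _ _)

lemma frobSq_pinv_mul_sub_le (hA : IsMoorePenrose A A') (hB : IsMoorePenrose B B') :
    frobSq (A' * (B - A))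
      ≤ spec B ^ 2 * frobSq (A' * (B - A) * B') + spec A ^ 2 * frobSq ((1 - B' * B) * A') := by
  have e₁ : (Aᴴ - Bᴴ) * A'ᴴ = -(A' * (B - A))ᴴ := by
    rw [conjTranspose_mul, conjTranspose_sub, ← neg_sub, Matrix.neg_mul]
  have e₂ : B'ᴴ * (Aᴴ - Bᴴ) * A'ᴴ = -(A' * (B - A) * B')ᴴ := by
    rw [Matrix.mul_assoc, e₁, Matrix.mul_neg, ← conjTranspose_mul]
  have e₃ : A'ᴴ * (1 - Bᴴ * B'ᴴ) = ((1 - B' * B) * A')ᴴ := by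
    rw [conjTranspose_mul, conjTranspose_sub, conjTranspose_one, conjTranspose_mul]
  have h := frobSq_sub_mul_pinv_le hB.conjTranspose hA.conjTranspose
  rw [e₁, e₂, e₃, frobSq_neg, frobSq_neg, frobSq_conjTranspose, frobSq_conjTranspose,
    frobSq_conjTranspose, spec_conjTranspose, spec_conjTranspose] at h
  linarith

lemma le_frobSq_pinv_sub_pinv (hA : IsMoorePenrose A A') (hB : IsMoorePenrose B B') :
    (frobSq (A' * (B - A)) - spec B ^ 2 * frobSq (A' * (B - A) * B')) / spec A ^ 2
      + (frobSq ((B - A) * B') - spec A ^ 2 * frobSq (A' * (B - A) * B')) / spec B ^ 2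
      + frobSq (B' * (B - A) * A') ≤ frobSq (B' - A') := by
  have hleft : (frobSq (A' * (B - A)) - spec B ^ 2 * frobSq (A' * (B - A) * B')) / spec A ^ 2
      ≤ frobSq ((1 - B' * B) * A') :=
    div_le_of_le_mul₀ (sq_nonneg _) (frobSq_nonneg _) (by linarith [frobSq_pinv_mul_sub_le hA hB])
  have hright : (frobSq ((B - A) * B') - spec A ^ 2 * frobSq (A' * (B - A) * B')) / spec B ^ 2
      ≤ frobSq (B' * (1 - A * A')) :=
    div_le_of_le_mul₀ (sq_nonneg _) (frobSq_nonneg _) (by linarith [frobSq_sub_mul_pinv_le hA hB])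
  linarith [frobSq_add_frobSq_add_frobSq_le hA hB]

end PseudoinversePerturbation

theorem stmt9_general {m n : ℕ}
    (A B : Matrix (Fin m) (Fin n) ℂ)
    (Adag Bdag : Matrix (Fin n) (Fin m) ℂ)
    (hA : IsMoorePenrose A Adag) (hB : IsMoorePenrose B Bdag)
    (E : Matrix (Fin m) (Fin n) ℂ) (hE : E = B - A)
    :
    frobSq (Bdag - Adag) ≥
      max
        ((frobSq (Adag * E) - spec B ^ 2 * frobSq (Adag * E * Bdag)) / spec A ^ 2
          + (frobSq (E * Bdag) - spec A ^ 2 * frobSq (Adag * E * Bdag)) / spec B ^ 2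
          + frobSq (Bdag * E * Adag))
        ((frobSq (E * Adag) - spec B ^ 2 * frobSq (Bdag * E * Adag)) / spec A ^ 2
          + (frobSq (Bdag * E) - spec A ^ 2 * frobSq (Bdag * E * Adag)) / spec B ^ 2
          + frobSq (Adag * E * Bdag)) := by
  subst hE
  have hswap := le_frobSq_pinv_sub_pinv hB hA
  rw [← neg_sub B A, ← neg_sub Bdag Adag] at hswap
  simp only [Matrix.mul_neg, Matrix.neg_mul, frobSq_neg] at hswap
  exact max_le (le_frobSq_pinv_sub_pinv hA hB) (by linarith)

theorem stmt9 {m n : ℕ}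
    (A B : Matrix (Fin m) (Fin n) ℂ)
    (Adag Bdag : Matrix (Fin n) (Fin m) ℂ)
    (hA : IsMoorePenrose A Adag) (hB : IsMoorePenrose B Bdag)
    (E : Matrix (Fin m) (Fin n) ℂ) (hE : E = B - A)
    (hA0 : A ≠ 0) (hB0 : B ≠ 0)
    :
    frobSq (Bdag - Adag) ≥
      max
        ((frobSq (Adag * E) - spec B ^ 2 * frobSq (Adag * E * Bdag)) / spec A ^ 2
          + (frobSq (E * Bdag) - spec A ^ 2 * frobSq (Adag * E * Bdag)) / spec B ^ 2
          + frobSq (Bdag * E * Adag))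
        ((frobSq (E * Adag) - spec B ^ 2 * frobSq (Bdag * E * Adag)) / spec A ^ 2
          + (frobSq (Bdag * E) - spec A ^ 2 * frobSq (Bdag * E * Adag)) / spec B ^ 2
          + frobSq (Adag * E * Bdag)) :=
  stmt9_general A B Adag Bdag hA hB E hE
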